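/- arXiv:1206.3537 — 6 statements merged into one kernel-verified Lean document; each statement's English description precedes it below -/
import Mathlib

section
/- Let U be an N×M real matrix whose columns are orthonormal, H = U Uᵀ the associated orthogonal projection, Θ = I − H, and let K be an N×N real matrix. For n ≥ 1 set Kₙ = (KΘ)^{n−1}K. If the spectral radii satisfy Ψ(K) < 1 and Ψ(KΘ) < 1, then Uᵀ(I−K)^{−1}(I−Kᵀ)^{−1}U = (I − ∑_{n=1}^∞ UᵀKₙU)^{−1} · (I + ∑_{n,m=1}^∞ UᵀKₙΘKₘᵀU) · (I − ∑_{m=1}^∞ UᵀKₘᵀU)^{−1}, where the matrix series converge absolutely (entrywise) and the M×M matrix inverses exist. -/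
/-!
Put `S = ∑ₙ (KΘ)ⁿ K = (1 - KΘ)⁻¹ K`, so that `∑ₙ Kₙ = S`. Since `Θ + U Uᵀ = 1`, the resolvent
factors as `1 - K = (1 - KΘ)(1 - S U Uᵀ)`, and `(1 - KΘ)⁻¹ = 1 + SΘ`. The push-through identity
`Uᵀ (1 - S U Uᵀ)⁻¹ = (1 - Uᵀ S U)⁻¹ Uᵀ` then gives `Uᵀ (1 - K)⁻¹ = (1 - Uᵀ S U)⁻¹ Uᵀ (1 + SΘ)`;
transposing, and using `Θ U = 0`, `Θ² = Θ` in the middle factor, yields the identity.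
Convergence comes from Gelfand's formula: `Ψ(KΘ) < 1` makes `‖(KΘ)ⁿ‖` decay geometrically, and
in finite dimension convergent series are absolutely convergent, so they can be multiplied.
-/

open Matrix

/-- The spectral radius of a real matrix: the supremum of the moduli of its
complex eigenvalues (its spectrum over `ℂ`). -/
noncomputable def specRad {N : ℕ} (A : Matrix (Fin N) (Fin N) ℝ) : ENNReal :=
  spectralRadius ℂ (A.map Complex.ofReal)

open Filter

theorem summable_norm_pow_of_spectralRadius_lt_one {A : Type*} [NormedRing A]
    [NormedAlgebra ℂ A] [CompleteSpace A] {a : A} (h : spectralRadius ℂ a < 1) :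
    Summable fun n : ℕ => ‖a ^ n‖ := by
  obtain ⟨r, hρr, hr1⟩ := ENNReal.lt_iff_exists_nnreal_btwn.mp h
  refine Summable.of_norm_bounded_eventually_nat
    (summable_geometric_of_lt_one r.2 (by exact_mod_cast hr1)) ?_
  have gelfand := spectrum.pow_nnnorm_pow_one_div_tendsto_nhds_spectralRadius a
  filter_upwards [gelfand.eventually_lt_const hρr, eventually_gt_atTop 0] with n hn hn0
  have hpow := ENNReal.rpow_le_rpow hn.le (z := n) (by positivity)
  rw [← ENNReal.rpow_mul, one_div_mul_cancel (by positivity), ENNReal.rpow_one,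
    ENNReal.rpow_natCast, ← ENNReal.coe_pow, ENNReal.coe_le_coe] at hpow
  rw [norm_norm]
  exact_mod_cast hpow

theorem summable_pow_of_specRad_lt_one {N : ℕ} {A : Matrix (Fin N) (Fin N) ℝ}
    (h : specRad A < 1) : Summable (A ^ ·) := by
  -- any submultiplicative norm turns complex matrices into a Banach algebra for Gelfand's formula
  let _ := Matrix.linftyOpNormedRing (n := Fin N) (α := ℂ)
  let _ := Matrix.linftyOpNormedAlgebra (n := Fin N) (R := ℂ) (α := ℂ)
  have hC : Summable fun n : ℕ => (A ^ n).map Complex.ofReal :=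
    (summable_norm_pow_of_spectralRadius_lt_one h).of_norm.congr fun n =>
      (Matrix.map_pow A Complex.ofRealHom n).symm
  exact Pi.summable.2 fun i => Pi.summable.2 fun j =>
    Complex.summable_ofReal.1 (Pi.summable.1 (Pi.summable.1 hC i) j)

theorem Summable.isUnit_one_sub {α : Type*} [Ring α] [TopologicalSpace α] [IsTopologicalRing α]
    [T2Space α] {x : α} (h : Summable (x ^ ·)) : IsUnit (1 - x) :=
  ⟨⟨1 - x, ∑' n, x ^ n, h.one_sub_mul_tsum_pow, h.tsum_pow_mul_one_sub⟩, rfl⟩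

theorem HasSum.mul_of_finiteDimensional {ι κ A : Type*} [NormedRing A] [NormedAlgebra ℝ A]
    [FiniteDimensional ℝ A] {f : ι → A} {g : κ → A} {a b : A} (hf : HasSum f a)
    (hg : HasSum g b) : HasSum (fun x : ι × κ => f x.1 * g x.2) (a * b) :=
  haveI := FiniteDimensional.complete ℝ A
  hf.mul hg (summable_mul_of_summable_norm (summable_norm_iff.2 hf.summable)
    (summable_norm_iff.2 hg.summable))

theorem HasSum.matrix_mul_prod {ι κ n : Type*} [Fintype n] [DecidableEq n]
    {f : ι → Matrix n n ℝ} {g : κ → Matrix n n ℝ} {a b : Matrix n n ℝ}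
    (hf : HasSum f a) (hg : HasSum g b) :
    HasSum (fun x : ι × κ => f x.1 * g x.2) (a * b) :=
  let _ := Matrix.linftyOpNormedRing (n := n) (α := ℝ)
  let _ := Matrix.linftyOpNormedAlgebra (n := n) (R := ℝ) (α := ℝ)
  hf.mul_of_finiteDimensional hg

theorem HasSum.matrix_mul_left {ι l m n R : Type*} [Fintype m] [NonUnitalNonAssocSemiring R]
    [TopologicalSpace R] [IsTopologicalSemiring R] (A : Matrix l m R) {f : ι → Matrix m n R}
    {a : Matrix m n R} (hf : HasSum f a) : HasSum (fun x => A * f x) (A * a) :=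
  hf.map (addMonoidHomMulLeft A) (continuous_const.matrix_mul continuous_id)

theorem HasSum.matrix_mul_right {ι l m n R : Type*} [Fintype m] [NonUnitalNonAssocSemiring R]
    [TopologicalSpace R] [IsTopologicalSemiring R] (B : Matrix m n R) {f : ι → Matrix l m R}
    {a : Matrix l m R} (hf : HasSum f a) : HasSum (fun x => f x * B) (a * B) :=
  hf.map (addMonoidHomMulRight B) (continuous_id.matrix_mul continuous_const)

theorem Summable.abs_matrix_apply {ι m n : Type*} {f : ι → Matrix m n ℝ} (h : Summable f)
    (i : m) (j : n) : Summable fun x => |f x i j| :=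
  (Pi.summable.1 (Pi.summable.1 h i) j).abs

namespace Matrix

variable {m n R : Type*} [Fintype m] [Fintype n] [DecidableEq n] [CommRing R]
  {U : Matrix n m R} {Θ K S : Matrix n n R}

theorem inv_one_sub_eq_one_add (hS : (1 - K * Θ) * S = K) : (1 - K * Θ)⁻¹ = 1 + S * Θ :=
  inv_eq_right_inv <| by rw [Matrix.mul_add, Matrix.mul_one, ← Matrix.mul_assoc, hS]; abel

theorem one_sub_eq_mul_one_sub (hΘ : Θ = 1 - U * Uᵀ) (hS : (1 - K * Θ) * S = K) :
    1 - K = (1 - K * Θ) * (1 - S * (U * Uᵀ)) := by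
  rw [Matrix.mul_sub, Matrix.mul_one, ← Matrix.mul_assoc, hS, hΘ, Matrix.mul_sub, Matrix.mul_one]
  abel

variable [DecidableEq m]

theorem mul_inv_one_sub_mul_comm (A : Matrix m n R) (B : Matrix n m R) :
    B * (1 - A * B)⁻¹ = (1 - B * A)⁻¹ * B := by
  -- by Sylvester's determinant identity both are invertible together, else both inverses are 0
  by_cases h : IsUnit (1 - A * B).det
  · have h' : IsUnit (1 - B * A).det := by rwa [← det_one_sub_mul_comm]
    have hcomm : (1 - B * A) * B = B * (1 - A * B) := by
      simp only [Matrix.sub_mul, Matrix.mul_sub, Matrix.one_mul, Matrix.mul_one, Matrix.mul_assoc]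
    calc B * (1 - A * B)⁻¹ = (1 - B * A)⁻¹ * ((1 - B * A) * B) * (1 - A * B)⁻¹ := by
          rw [← Matrix.mul_assoc, nonsing_inv_mul _ h', Matrix.one_mul]
      _ = (1 - B * A)⁻¹ * B := by
          rw [hcomm, Matrix.mul_assoc, Matrix.mul_assoc, mul_nonsing_inv _ h, Matrix.mul_one]
  · have h' : ¬IsUnit (1 - B * A).det := by rwa [← det_one_sub_mul_comm]
    rw [nonsing_inv_apply_not_isUnit _ h, nonsing_inv_apply_not_isUnit _ h', Matrix.mul_zero,
      Matrix.zero_mul]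

theorem isUnit_one_sub_transpose_mul_mul (hΘ : Θ = 1 - U * Uᵀ) (hS : (1 - K * Θ) * S = K)
    (hK : IsUnit (1 - K)) : IsUnit (1 - Uᵀ * S * U) := by
  rw [isUnit_iff_isUnit_det, one_sub_eq_mul_one_sub hΘ hS, det_mul] at hK
  rw [isUnit_iff_isUnit_det, Matrix.mul_assoc, ← det_one_sub_mul_comm, Matrix.mul_assoc]
  exact isUnit_of_mul_isUnit_right hK

theorem transpose_mul_inv_one_sub (hΘ : Θ = 1 - U * Uᵀ) (hS : (1 - K * Θ) * S = K) :
    Uᵀ * (1 - K)⁻¹ = (1 - Uᵀ * S * U)⁻¹ * Uᵀ * (1 + S * Θ) := by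
  rw [one_sub_eq_mul_one_sub hΘ hS, mul_inv_rev, inv_one_sub_eq_one_add hS, ← Matrix.mul_assoc,
    ← Matrix.mul_assoc S, mul_inv_one_sub_mul_comm, Matrix.mul_assoc Uᵀ S]

theorem transpose_mul_one_add_mul_one_add_mul (hU : Uᵀ * U = 1) (hΘ : Θ = 1 - U * Uᵀ)
    (S T : Matrix n n R) :
    Uᵀ * (1 + S * Θ) * ((1 + Θ * T) * U) = 1 + Uᵀ * (S * Θ * T) * U := by
  have hΘU : Θ * U = 0 := by
    rw [hΘ, Matrix.sub_mul, Matrix.one_mul, Matrix.mul_assoc, hU, Matrix.mul_one, sub_self]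
  have hUΘ : Uᵀ * Θ = 0 := by
    rw [hΘ, Matrix.mul_sub, Matrix.mul_one, ← Matrix.mul_assoc, hU, Matrix.one_mul, sub_self]
  have hΘΘ : Θ * Θ = Θ := by
    nth_rewrite 2 [hΘ]
    rw [Matrix.mul_sub, Matrix.mul_one, ← Matrix.mul_assoc, hΘU, Matrix.zero_mul, sub_zero]
  calc Uᵀ * (1 + S * Θ) * ((1 + Θ * T) * U)
      = Uᵀ * U + Uᵀ * Θ * T * U + Uᵀ * S * (Θ * U) + Uᵀ * S * (Θ * Θ) * T * U := by
        simp only [Matrix.mul_add, Matrix.add_mul, Matrix.mul_one, Matrix.one_mul,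
          Matrix.mul_assoc]
        abel
    _ = 1 + Uᵀ * (S * Θ * T) * U := by
        rw [hU, hUΘ, hΘU, hΘΘ]
        simp only [Matrix.zero_mul, Matrix.mul_zero, add_zero, Matrix.mul_assoc]

theorem transpose_mul_inv_one_sub_mul_inv_one_sub_transpose_mul (hU : Uᵀ * U = 1)
    (hΘ : Θ = 1 - U * Uᵀ) (hS : (1 - K * Θ) * S = K) :
    Uᵀ * (1 - K)⁻¹ * (1 - Kᵀ)⁻¹ * U =
      (1 - Uᵀ * S * U)⁻¹ * (1 + Uᵀ * (S * Θ * Sᵀ) * U) * (1 - Uᵀ * Sᵀ * U)⁻¹ := by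
  have hΘT : Θᵀ = Θ := by simp [hΘ]
  have hL := transpose_mul_inv_one_sub hΘ hS
  have hR : (1 - Kᵀ)⁻¹ * U = (1 + Θ * Sᵀ) * U * (1 - Uᵀ * Sᵀ * U)⁻¹ := by
    simpa [transpose_nonsing_inv, hΘT, Matrix.mul_assoc] using congrArg transpose hL
  calc Uᵀ * (1 - K)⁻¹ * (1 - Kᵀ)⁻¹ * U = Uᵀ * (1 - K)⁻¹ * ((1 - Kᵀ)⁻¹ * U) :=
        Matrix.mul_assoc _ _ _
    _ = (1 - Uᵀ * S * U)⁻¹ * (Uᵀ * (1 + S * Θ) * ((1 + Θ * Sᵀ) * U)) *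
          (1 - Uᵀ * Sᵀ * U)⁻¹ := by
        rw [hL, hR]
        simp only [Matrix.mul_assoc]
    _ = _ := by rw [transpose_mul_one_add_mul_one_add_mul hU hΘ]

end Matrix

/-- **Proposition 2 (multi-population resumming identity).**
Let `U` be an `N×M` real matrix with orthonormal columns (`Uᵀ U = I`),
`H = U Uᵀ`, `Θ = I − H`, and `K` an `N×N` real matrix; for `n ≥ 1` set
`Kₙ = (KΘ)^{n−1}K`.  If `Ψ(K) < 1` and `Ψ(KΘ) < 1`, then the matrix series
converge absolutely entrywise, the `M×M` matrix inverses exist, and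
`Uᵀ(I−K)⁻¹(I−Kᵀ)⁻¹U
  = (I − ∑ₙ UᵀKₙU)⁻¹ (I + ∑ₙₘ UᵀKₙΘKₘᵀU) (I − ∑ₘ UᵀKₘᵀU)⁻¹`. -/
theorem stmt1 {N M : ℕ} (U : Matrix (Fin N) (Fin M) ℝ)
    (hU : Uᵀ * U = 1)
    (K Θ : Matrix (Fin N) (Fin N) ℝ)
    (hΘ : Θ = 1 - U * Uᵀ)
    (Kn : ℕ → Matrix (Fin N) (Fin N) ℝ)
    (hKn : ∀ n : ℕ, Kn (n + 1) = (K * Θ) ^ n * K)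
    (hK : specRad K < 1) (hKΘ : specRad (K * Θ) < 1) :
    (∀ a b : Fin M, Summable (fun n : ℕ => |(Uᵀ * Kn (n + 1) * U) a b|)) ∧
    (∀ a b : Fin M, Summable (fun m : ℕ => |(Uᵀ * (Kn (m + 1))ᵀ * U) a b|)) ∧
    (∀ a b : Fin M, Summable (fun nm : ℕ × ℕ =>
        |(Uᵀ * (Kn (nm.1 + 1) * Θ * (Kn (nm.2 + 1))ᵀ) * U) a b|)) ∧
    IsUnit (1 - ∑' n : ℕ, Uᵀ * Kn (n + 1) * U) ∧
    IsUnit (1 - ∑' m : ℕ, Uᵀ * (Kn (m + 1))ᵀ * U) ∧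
    Uᵀ * (1 - K)⁻¹ * (1 - Kᵀ)⁻¹ * U =
      (1 - ∑' n : ℕ, Uᵀ * Kn (n + 1) * U)⁻¹ *
        (1 + ∑' nm : ℕ × ℕ, Uᵀ * (Kn (nm.1 + 1) * Θ * (Kn (nm.2 + 1))ᵀ) * U) *
        (1 - ∑' m : ℕ, Uᵀ * (Kn (m + 1))ᵀ * U)⁻¹ := by
  have hgeom := summable_pow_of_specRad_lt_one hKΘ
  set S := (∑' n, (K * Θ) ^ n) * K
  have hS : HasSum (fun n => Kn (n + 1)) S := by
    simpa only [hKn] using hgeom.hasSum.mul_right K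
  have hSK : (1 - K * Θ) * S = K := by
    rw [← mul_assoc, hgeom.one_sub_mul_tsum_pow, one_mul]
  have h₁ : HasSum (fun n => Uᵀ * Kn (n + 1) * U) (Uᵀ * S * U) :=
    (hS.matrix_mul_left Uᵀ).matrix_mul_right U
  have h₂ : HasSum (fun m => Uᵀ * (Kn (m + 1))ᵀ * U) (Uᵀ * Sᵀ * U) :=
    (hS.matrix_transpose.matrix_mul_left Uᵀ).matrix_mul_right U
  have h₃ : HasSum (fun nm : ℕ × ℕ => Uᵀ * (Kn (nm.1 + 1) * Θ * (Kn (nm.2 + 1))ᵀ) * U)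
      (Uᵀ * (S * Θ * Sᵀ) * U) :=
    (((hS.mul_right Θ).matrix_mul_prod hS.matrix_transpose).matrix_mul_left Uᵀ).matrix_mul_right U
  have hunit : IsUnit (1 - Uᵀ * S * U) :=
    isUnit_one_sub_transpose_mul_mul hΘ hSK (summable_pow_of_specRad_lt_one hK).isUnit_one_sub
  have hunitT : IsUnit (1 - Uᵀ * Sᵀ * U) := by
    simpa [Matrix.mul_assoc] using (isUnit_transpose _).2 hunit
  rw [h₁.tsum_eq, h₂.tsum_eq, h₃.tsum_eq]
  exact ⟨h₁.summable.abs_matrix_apply, h₂.summable.abs_matrix_apply,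
    h₃.summable.abs_matrix_apply, hunit, hunitT,
    transpose_mul_inv_one_sub_mul_inv_one_sub_transpose_mul hU hΘ hSK⟩
end

section
/- Let u be a unit vector in ℝ^N, H = u uᵀ, Θ = I − H, K an arbitrary N×N real matrix, and for n ≥ 1 set Kₙ = (KΘ)^{n−1}K. Then for every integer i ≥ 1, uᵀK^i u = ∑_{(n₁,…,n_k) composition of i} ∏_{s=1}^k uᵀK_{n_s}u, where the sum runs over all ordered tuples (n₁,…,n_k) of positive integers with n₁+⋯+n_k = i. -/
/-!
Since `Θ = 1 - u uᵀ`, we can write `K = KΘ + K u uᵀ` and expand `K^(m+1)` according to the first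
factor `K u uᵀ`; the term without such a factor vanishes on `u` because `Θ u = 0`. This gives
the renewal equation `aₘ₊₁ = ∑ₖ fₖ₊₁ aₘ₋ₖ` for `aₙ = uᵀKⁿu` and `fₙ = uᵀKₙu`, with `a₀ = 1`.
Splitting off the first block of a composition shows that the composition sums satisfy the
same recursion, so the two sequences agree.
-/

open Finset Matrix

-- Noncommutative expansion according to the first occurrence of `y`.
theorem add_pow_eq_pow_add_sum {R : Type*} [Semiring R] (x y : R) (m : ℕ) :
    (x + y) ^ m = x ^ m + ∑ n ∈ range m, x ^ n * y * (x + y) ^ (m - 1 - n) := by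
  induction m with
  | zero => simp
  | succ m ih =>
    have hexp : ∀ n ∈ range m, x ^ (n + 1) * y * (x + y) ^ (m + 1 - 1 - (n + 1))
        = x * (x ^ n * y * (x + y) ^ (m - 1 - n)) := by
      intro n _
      rw [show m + 1 - 1 - (n + 1) = m - 1 - n by omega, pow_succ', mul_assoc, mul_assoc,
        mul_assoc]
    rw [sum_range_succ', sum_congr rfl hexp, ← mul_sum, pow_succ', add_mul]
    nth_rw 1 [ih]
    simp only [pow_zero, one_mul, Nat.add_sub_cancel, Nat.sub_zero, mul_add, pow_succ', add_assoc]

namespace Composition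

variable {m : ℕ} (c : Composition (m + 1))

theorem cons_head!_tail_blocks : c.blocks.head! :: c.blocks.tail = c.blocks :=
  List.cons_head!_tail <| List.length_pos_iff.mp <| c.length_pos_iff.mpr m.succ_pos

theorem head!_blocks_pos : 0 < c.blocks.head! :=
  c.blocks_pos <| c.cons_head!_tail_blocks ▸ List.mem_cons_self

theorem head!_blocks_add_sum_tail : c.blocks.head! + c.blocks.tail.sum = m + 1 := by
  rw [← List.sum_cons, c.cons_head!_tail_blocks, c.blocks_sum]

def consEquiv (m : ℕ) : (Σ k : Fin (m + 1), Composition (m - k)) ≃ Composition (m + 1) where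
  toFun p :=
    { blocks := (p.1 + 1) :: p.2.blocks
      blocks_pos := by
        rintro i (_ | ⟨_, hi⟩)
        exacts [Nat.succ_pos _, p.2.blocks_pos hi]
      blocks_sum := by simp only [List.sum_cons, p.2.blocks_sum]; omega }
  invFun c :=
    ⟨⟨c.blocks.head! - 1, by have := c.head!_blocks_add_sum_tail; omega⟩,
      { blocks := c.blocks.tail
        blocks_pos := fun hi => c.blocks_pos (List.mem_of_mem_tail hi)
        blocks_sum := by
          have := c.head!_blocks_pos; have := c.head!_blocks_add_sum_tail; simp only; omega }⟩
  left_inv _ := rfl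
  right_inv c := by
    ext1
    conv_rhs => rw [← c.cons_head!_tail_blocks]
    simp only [Nat.sub_add_cancel c.head!_blocks_pos]

theorem sum_prod_map_blocks_succ {R : Type*} [CommSemiring R] (f : ℕ → R) (m : ℕ) :
    ∑ c : Composition (m + 1), (c.blocks.map f).prod
      = ∑ k ∈ range (m + 1), f (k + 1) * ∑ c : Composition (m - k), (c.blocks.map f).prod := by
  rw [← (consEquiv m).sum_comp, ← univ_sigma_univ, sum_sigma, ← Fin.sum_univ_eq_sum_range
    (fun k => f (k + 1) * ∑ c : Composition (m - k), (c.blocks.map f).prod)]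
  refine sum_congr rfl fun k _ => ?_
  rw [mul_sum]
  rfl

theorem sum_prod_map_blocks_zero {R : Type*} [CommSemiring R] (f : ℕ → R) :
    ∑ c : Composition 0, (c.blocks.map f).prod = 1 := by
  rw [Fintype.sum_eq_single (ones 0) fun c hc => (hc <| eq_ones_iff_length.mpr <|
    Nat.le_zero.mp c.length_le).elim]
  simp [ones_blocks]

theorem eq_sum_prod_map_blocks_of_renewal {R : Type*} [CommSemiring R]
    (f a : ℕ → R) (h0 : a 0 = 1)
    (hsucc : ∀ m, a (m + 1) = ∑ k ∈ range (m + 1), f (k + 1) * a (m - k)) (n : ℕ) :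
    a n = ∑ c : Composition n, (c.blocks.map f).prod := by
  induction n using Nat.strong_induction_on with
  | _ n ih =>
    cases n with
    | zero => rw [h0, sum_prod_map_blocks_zero]
    | succ m =>
      rw [hsucc, sum_prod_map_blocks_succ]
      exact sum_congr rfl fun k _ => by rw [ih (m - k) (by omega)]

end Composition

namespace Matrix

variable {ι R : Type*} [Fintype ι] [CommRing R]

theorem dotProduct_mul_vecMulVec_mul_mulVec {l o : Type*} [Fintype l] [Fintype o]
    (v : l → R) (A : Matrix l ι R) (x y : ι → R) (B : Matrix ι o R) (w : o → R) :
    v ⬝ᵥ (A * vecMulVec x y * B) *ᵥ w = (v ⬝ᵥ A *ᵥ x) * (y ⬝ᵥ B *ᵥ w) := by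
  simp [← mulVec_mulVec, vecMulVec_mulVec, mulVec_smul, dotProduct_smul, mul_comm]

variable [DecidableEq ι] {u : ι → R}

theorem one_sub_vecMulVec_mulVec_self (hu : u ⬝ᵥ u = 1) : (1 - vecMulVec u u) *ᵥ u = 0 := by
  simp [sub_mulVec, vecMulVec_mulVec, hu]

theorem dotProduct_pow_succ_mulVec (hu : u ⬝ᵥ u = 1) (K : Matrix ι ι R) (m : ℕ) :
    u ⬝ᵥ K ^ (m + 1) *ᵥ u = ∑ k ∈ range (m + 1),
      (u ⬝ᵥ ((K * (1 - vecMulVec u u)) ^ k * K) *ᵥ u) * (u ⬝ᵥ K ^ (m - k) *ᵥ u) := by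
  set Θ := 1 - vecMulVec u u
  have hK : K = K * Θ + K * vecMulVec u u := by simp [Θ, mul_sub]
  have hvanish : (K * Θ) ^ (m + 1) *ᵥ u = 0 := by
    rw [pow_succ, ← mul_assoc, ← mulVec_mulVec, one_sub_vecMulVec_mulVec_self hu, mulVec_zero]
  conv_lhs => rw [hK]
  rw [add_pow_eq_pow_add_sum, add_mulVec, dotProduct_add, hvanish, dotProduct_zero, zero_add,
    sum_mulVec, dotProduct_sum]
  refine sum_congr rfl fun k _ => ?_
  rw [← mul_assoc, dotProduct_mul_vecMulVec_mul_mulVec, ← hK, Nat.add_sub_cancel]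

end Matrix

theorem stmt4_general {N : ℕ} (u : Fin N → ℝ) (hu : u ⬝ᵥ u = 1)
    (K Θ : Matrix (Fin N) (Fin N) ℝ)
    (hΘ : Θ = 1 - vecMulVec u u)
    (Kn : ℕ → Matrix (Fin N) (Fin N) ℝ)
    (hKn : ∀ n : ℕ, Kn (n + 1) = (K * Θ) ^ n * K)
    (i : ℕ) :
    u ⬝ᵥ (K ^ i).mulVec u =
      ∑ c : Composition i,
        (c.blocks.map fun b => u ⬝ᵥ (Kn b).mulVec u).prod := by
  refine Composition.eq_sum_prod_map_blocks_of_renewal _ (fun n => u ⬝ᵥ (K ^ n) *ᵥ u)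
    (by simp [hu]) (fun m => ?_) i
  simp only [dotProduct_pow_succ_mulVec hu, hKn, hΘ]

/-- **Combinatorial identity (E:prop_r1).**
Let `u` be a unit vector in `ℝ^N`, `H = u uᵀ`, `Θ = I − H`, `K` an arbitrary
`N×N` real matrix, and `Kₙ = (KΘ)^{n−1}K` for `n ≥ 1`.  Then for every `i ≥ 1`,
`uᵀK^i u = ∑_{(n₁,…,n_k) composition of i} ∏_{s=1}^k uᵀK_{n_s}u`. -/
theorem stmt4 {N : ℕ} (u : Fin N → ℝ) (hu : u ⬝ᵥ u = 1)
    (K Θ : Matrix (Fin N) (Fin N) ℝ)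
    (hΘ : Θ = 1 - vecMulVec u u)
    (Kn : ℕ → Matrix (Fin N) (Fin N) ℝ)
    (hKn : ∀ n : ℕ, Kn (n + 1) = (K * Θ) ^ n * K)
    (i : ℕ) (hi : 1 ≤ i) :
    u ⬝ᵥ (K ^ i).mulVec u =
      ∑ c : Composition i,
        (c.blocks.map fun b => u ⬝ᵥ (Kn b).mulVec u).prod :=
  stmt4_general u hu K Θ hΘ Kn hKn i
end

section
/- Let u be a unit vector in ℝ^N, H = u uᵀ, Θ = I − H, K an arbitrary N×N real matrix, and for n ≥ 1 set Kₙ = (KΘ)^{n−1}K. Then for all integers i, j ≥ 1, uᵀ K^i Θ (Kᵀ)^j u = ∑_{(n₁,…,n_{k+1}) composition of i} ∑_{(m₁,…,m_{l+1}) composition of j} (∏_{s=1}^k uᵀK_{n_s}u) · (uᵀK_{n_{k+1}} Θ K_{m_{l+1}}ᵀ u) · (∏_{t=1}^l uᵀK_{m_t}ᵀu). -/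
/-!
With `H = u uᵀ` one has `uᵀ A H = (uᵀ A u) uᵀ`. Inserting `I = H + Θ` before the last factor of
`uᵀ K^{i+1} = uᵀ K^i K` either closes the current block, contributing the weight `uᵀ K_n u` and
starting a new block `K₁ = K`, or extends it, since `K_n Θ K = K_{n+1}`. As the compositions of
`i + 1` are exactly those of `i` with either a new last block `1` or their last block increased by
one, induction gives `uᵀ K^i = ∑_c (∏_{s ≤ k} uᵀ K_{n_s} u) uᵀ K_{n_{k+1}}`. Pairing this
expansion of `uᵀ K^i` with that of `uᵀ K^j` through `Θ` gives the identity.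
-/

open Matrix

namespace Composition

variable {n : ℕ}

lemma sum_dropLast_add_getLastD (c : Composition n) :
    c.blocks.dropLast.sum + c.blocks.getLastD 0 = n := by
  conv_rhs => rw [← c.blocks_sum]
  rcases List.eq_nil_or_concat c.blocks with h | ⟨L, b, h⟩ <;> simp [h]

lemma dropLast_append_getLastD (c : Composition n) (hn : n ≠ 0) :
    c.blocks.dropLast ++ [c.blocks.getLastD 0] = c.blocks := by
  rcases List.eq_nil_or_concat c.blocks with h | ⟨L, b, h⟩
  · exact absurd (c.blocks_eq_nil.mp h) hn
  · simp [h]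

lemma one_le_getLastD (c : Composition n) (hn : n ≠ 0) : 1 ≤ c.blocks.getLastD 0 := by
  have h : c.blocks.getLastD 0 ∈ c.blocks.dropLast ++ [c.blocks.getLastD 0] :=
    List.mem_concat_self
  rw [c.dropLast_append_getLastD hn] at h
  exact c.one_le_blocks h

@[simps]
def bumpLast (c : Composition n) : Composition (n + 1) where
  blocks := c.blocks.dropLast ++ [c.blocks.getLastD 0 + 1]
  blocks_pos h := by
    rcases List.mem_append.mp h with h | h
    · exact c.blocks_pos (List.dropLast_subset _ h)
    · simp only [List.mem_singleton] at h
      omega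
  blocks_sum := by
    rw [List.sum_append, List.sum_singleton, ← add_assoc, c.sum_dropLast_add_getLastD]

lemma bijective_sumElim_append_single_bumpLast (hn : n ≠ 0) :
    Function.Bijective
      (Sum.elim (fun c : Composition n => c.append (single 1 one_pos)) bumpLast) := by
  refine ⟨Function.Injective.sumElim ?_ ?_ ?_, fun c => ?_⟩
  · intro c d h
    exact Composition.ext (List.append_cancel_right (congrArg blocks h))
  · intro c d h
    obtain ⟨hdrop, hlast⟩ := List.append_inj' (congrArg blocks h) rfl
    simp only [List.cons.injEq, add_left_inj, and_true] at hlast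
    exact Composition.ext <| by
      rw [← c.dropLast_append_getLastD hn, ← d.dropLast_append_getLastD hn, hdrop, hlast]
  · intro c d h
    have := congrArg (fun e : Composition (n + 1) => e.blocks.getLastD 0) h
    simp only [append_blocks, single_blocks, bumpLast_blocks, List.getLastD_concat] at this
    have := d.one_le_getLastD hn
    omega
  obtain ⟨L, b, hc⟩ := (List.eq_nil_or_concat c.blocks).resolve_left
    (by simp [blocks_eq_nil])
  simp only [List.concat_eq_append] at hc
  have hb : 1 ≤ b := c.one_le_blocks (by simp [hc])
  have hsum : L.sum + b = n + 1 := by simpa [hc] using c.blocks_sum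
  have hL : ∀ x ∈ L, 0 < x := fun x hx => c.blocks_pos (by simp [hc, hx])
  rcases hb.eq_or_lt with rfl | hb
  · exact ⟨.inl ⟨L, hL _, by omega⟩, Composition.ext (by simp [hc])⟩
  · refine ⟨.inr ⟨L ++ [b - 1], fun hx => ?_, by rw [List.sum_append, List.sum_singleton]; omega⟩,
      Composition.ext ?_⟩
    · rcases List.mem_append.mp hx with hx | hx
      · exact hL _ hx
      · simp only [List.mem_singleton] at hx
        omega
    · simp only [Sum.elim_inr, bumpLast_blocks, List.dropLast_concat, List.getLastD_concat,
        Nat.sub_add_cancel hb.le, hc]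

noncomputable def succEquiv (hn : n ≠ 0) : Composition n ⊕ Composition n ≃ Composition (n + 1) :=
  .ofBijective _ (bijective_sumElim_append_single_bumpLast hn)

lemma sum_succ {M : Type*} [AddCommMonoid M] (hn : n ≠ 0) (F : Composition (n + 1) → M) :
    ∑ c, F c =
      ∑ c : Composition n, F (c.append (single 1 one_pos)) + ∑ c : Composition n, F c.bumpLast := by
  rw [← (succEquiv hn).sum_comp, Fintype.sum_sum_type]
  rfl

end Composition

namespace Matrix

variable {ι R : Type*} [Fintype ι] [CommRing R]

lemma dotProduct_mul_transpose_mulVec (x y : ι → R) (A B : Matrix ι ι R) :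
    x ⬝ᵥ (A * Bᵀ) *ᵥ y = (x ᵥ* A) ⬝ᵥ (y ᵥ* B) := by
  rw [← mulVec_mulVec, mulVec_transpose, dotProduct_mulVec]

lemma vecMul_mul_eq_add_of_eq_one_sub_vecMulVec [DecidableEq ι] {u : ι → R} {Θ : Matrix ι ι R}
    (hΘ : Θ = 1 - vecMulVec u u) (x : ι → R) (A B : Matrix ι ι R) :
    x ᵥ* (A * B) = (x ⬝ᵥ A *ᵥ u) • (u ᵥ* B) + x ᵥ* (A * Θ * B) := by
  have hsplit : A * B = A * vecMulVec u u * B + A * Θ * B := by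
    rw [hΘ]
    noncomm_ring
  rw [hsplit, vecMul_add, ← vecMul_vecMul, ← vecMul_vecMul, vecMul_vecMulVec, smul_vecMul,
    dotProduct_mulVec]

lemma vecMul_mul_eq_add_vecMul_succ [DecidableEq ι] {u : ι → R} {K Θ : Matrix ι ι R}
    (hΘ : Θ = 1 - vecMulVec u u) {Kn : ℕ → Matrix ι ι R}
    (hKn : ∀ n : ℕ, Kn (n + 1) = (K * Θ) ^ n * K) (x : ι → R) (m : ℕ) :
    x ᵥ* (Kn (m + 1) * K) = (x ⬝ᵥ Kn (m + 1) *ᵥ u) • (u ᵥ* Kn 1) + x ᵥ* Kn (m + 2) := by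
  have hstep : Kn (m + 1) * Θ * K = Kn (m + 2) := by
    rw [hKn, hKn, pow_succ]
    simp only [Matrix.mul_assoc]
  rw [vecMul_mul_eq_add_of_eq_one_sub_vecMulVec hΘ, hstep, hKn 0, pow_zero, Matrix.one_mul]

theorem vecMul_pow_eq_sum_composition [DecidableEq ι] {u : ι → R} {K Θ : Matrix ι ι R}
    (hΘ : Θ = 1 - vecMulVec u u) {Kn : ℕ → Matrix ι ι R}
    (hKn : ∀ n : ℕ, Kn (n + 1) = (K * Θ) ^ n * K) {i : ℕ} (hi : 1 ≤ i) :
    u ᵥ* K ^ i = ∑ c : Composition i,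
      (c.blocks.dropLast.map fun b => u ⬝ᵥ Kn b *ᵥ u).prod • (u ᵥ* Kn (c.blocks.getLastD 0)) := by
  induction i, hi using Nat.le_induction with
  | base =>
    have : Subsingleton (Composition 1) :=
      Fintype.card_le_one_iff_subsingleton.mp (by simp [composition_card])
    rw [Fintype.sum_subsingleton _ (Composition.single 1 one_pos)]
    simp [hKn 0]
  | succ i hi ih =>
    have hi0 : i ≠ 0 := by omega
    calc u ᵥ* K ^ (i + 1)
        = ∑ c : Composition i, (c.blocks.dropLast.map fun b => u ⬝ᵥ Kn b *ᵥ u).prod •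
            (u ᵥ* (Kn (c.blocks.getLastD 0) * K)) := by
          rw [pow_succ, ← vecMul_vecMul, ih, sum_vecMul]
          simp only [smul_vecMul, vecMul_vecMul]
      _ = ∑ c : Composition i,
            (((c.blocks.dropLast.map fun b => u ⬝ᵥ Kn b *ᵥ u).prod *
                (u ⬝ᵥ Kn (c.blocks.getLastD 0) *ᵥ u)) • (u ᵥ* Kn 1) +
              (c.blocks.dropLast.map fun b => u ⬝ᵥ Kn b *ᵥ u).prod •
                (u ᵥ* Kn (c.blocks.getLastD 0 + 1))) := by
          refine Finset.sum_congr rfl fun c _ => ?_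
          obtain ⟨m, hm⟩ := Nat.exists_eq_add_of_le' (c.one_le_getLastD hi0)
          rw [hm, vecMul_mul_eq_add_vecMul_succ hΘ hKn, smul_add, smul_smul]
      _ = _ := by
          rw [Composition.sum_succ hi0, Finset.sum_add_distrib]
          congr 1
          · refine Finset.sum_congr rfl fun c _ => ?_
            simp only [Composition.append_blocks, Composition.single_blocks,
              List.dropLast_concat, List.getLastD_concat]
            conv_rhs => rw [← c.dropLast_append_getLastD hi0]
            rw [List.map_append, List.prod_append, List.map_singleton, List.prod_singleton]
          · simp only [Composition.bumpLast_blocks, List.dropLast_concat, List.getLastD_concat]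

end Matrix

theorem stmt5_general {N : ℕ} (u : Fin N → ℝ)
    (K Θ : Matrix (Fin N) (Fin N) ℝ)
    (hΘ : Θ = 1 - vecMulVec u u)
    (Kn : ℕ → Matrix (Fin N) (Fin N) ℝ)
    (hKn : ∀ n : ℕ, Kn (n + 1) = (K * Θ) ^ n * K)
    (i j : ℕ) (hi : 1 ≤ i) (hj : 1 ≤ j) :
    u ⬝ᵥ (K ^ i * Θ * (Kᵀ) ^ j).mulVec u =
      ∑ c : Composition i, ∑ d : Composition j,
        (c.blocks.dropLast.map fun b => u ⬝ᵥ (Kn b).mulVec u).prod *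
          (u ⬝ᵥ (Kn (c.blocks.getLastD 0) * Θ *
            (Kn (d.blocks.getLastD 0))ᵀ).mulVec u) *
          (d.blocks.dropLast.map fun b => u ⬝ᵥ ((Kn b)ᵀ).mulVec u).prod := by
  rw [← transpose_pow, dotProduct_mul_transpose_mulVec, ← vecMul_vecMul,
    vecMul_pow_eq_sum_composition hΘ hKn hi, vecMul_pow_eq_sum_composition hΘ hKn hj,
    sum_vecMul, sum_dotProduct]
  refine Finset.sum_congr rfl fun c _ => ?_
  rw [dotProduct_sum]
  refine Finset.sum_congr rfl fun d _ => ?_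
  simp only [dotProduct_transpose_mulVec, dotProduct_mul_transpose_mulVec, ← vecMul_vecMul,
    smul_vecMul, smul_dotProduct, dotProduct_smul, smul_eq_mul]
  ring

/-- **Combinatorial identity (E:prop_r2).**
Let `u` be a unit vector in `ℝ^N`, `H = u uᵀ`, `Θ = I − H`, `K` an arbitrary
`N×N` real matrix, and `Kₙ = (KΘ)^{n−1}K` for `n ≥ 1`.  Then for all `i, j ≥ 1`,
`uᵀ K^i Θ (Kᵀ)^j u
  = ∑_{(n₁,…,n_{k+1}) comp. of i} ∑_{(m₁,…,m_{l+1}) comp. of j}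
      (∏_{s=1}^k uᵀK_{n_s}u) (uᵀK_{n_{k+1}} Θ K_{m_{l+1}}ᵀ u) (∏_{t=1}^l uᵀK_{m_t}ᵀu)`,
where sums run over compositions (ordered tuples of positive integers summing to
`i`, resp. `j`), the last block of each composition indexing immediately the
middle factor, and empty products equal `1`. -/
theorem stmt5 {N : ℕ} (u : Fin N → ℝ) (hu : u ⬝ᵥ u = 1)
    (K Θ : Matrix (Fin N) (Fin N) ℝ)
    (hΘ : Θ = 1 - vecMulVec u u)
    (Kn : ℕ → Matrix (Fin N) (Fin N) ℝ)
    (hKn : ∀ n : ℕ, Kn (n + 1) = (K * Θ) ^ n * K)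
    (i j : ℕ) (hi : 1 ≤ i) (hj : 1 ≤ j) :
    u ⬝ᵥ (K ^ i * Θ * (Kᵀ) ^ j).mulVec u =
      ∑ c : Composition i, ∑ d : Composition j,
        (c.blocks.dropLast.map fun b => u ⬝ᵥ (Kn b).mulVec u).prod *
          (u ⬝ᵥ (Kn (c.blocks.getLastD 0) * Θ *
            (Kn (d.blocks.getLastD 0))ᵀ).mulVec u) *
          (d.blocks.dropLast.map fun b => u ⬝ᵥ ((Kn b)ᵀ).mulVec u).prod :=
  stmt5_general u K Θ hΘ Kn hKn i j hi hj
end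

section
/- Let W be any N×N real matrix, L = (1/N)·(1,…,1)ᵀ ∈ ℝ^N, H = N L Lᵀ, Θ = I − H, and set p = LᵀWL, q_ch = (1/N)LᵀWΘWL, q_div = (1/N)LᵀWΘWᵀL. Then LᵀW²(Wᵀ)²L = N³[p⁴ + p²q_div + 2p²q_ch + q_ch²] + LᵀWΘWΘWᵀΘWᵀL + N(LᵀWL)(LᵀWΘWᵀΘWᵀL) + N(LᵀWΘWΘWᵀL)(LᵀWᵀL). -/
open Matrix

/-!
Write `⟨M⟩ = Lᵀ M L`. Since `H = N L Lᵀ` has rank one, `H x = N (Lᵀ x) L`, so an `H` inside a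
product cuts `⟨A H B⟩` into `N ⟨A⟩ ⟨B⟩`. Inserting `I = H + Θ` into the three gaps of
`W · W · Wᵀ · Wᵀ` gives eight terms. Those containing an `H` in the middle gap, or in both outer
gaps, reduce to `p`, `N q_ch`, `N q_div` (with `⟨Wᵀ⟩ = p`, and `⟨WᵀΘWᵀ⟩ = N q_ch` because `Θ` is
symmetric); the other three are the remainders.
-/

theorem Matrix.transpose_one_sub_smul_vecMulVec_self {n R : Type*} [DecidableEq n] [CommRing R]
    (c : R) (v : n → R) :
    (1 - c • vecMulVec v v)ᵀ = 1 - c • vecMulVec v v := by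
  rw [transpose_sub, transpose_one, transpose_smul, transpose_vecMulVec]

theorem Matrix.dotProduct_sq_mul_transpose_sq_mulVec {n R : Type*} [Fintype n] [DecidableEq n]
    [CommRing R] (W H Θ : Matrix n n R)
    (v : n → R) (c : R) (hH : H = c • vecMulVec v v) (hΘ : Θ = 1 - H) :
    v ⬝ᵥ (W ^ 2 * Wᵀ ^ 2) *ᵥ v =
      c ^ 3 * (v ⬝ᵥ W *ᵥ v) ^ 4 + c ^ 2 * (v ⬝ᵥ W *ᵥ v) ^ 2 * (v ⬝ᵥ (W * Θ * Wᵀ) *ᵥ v) +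
        2 * c ^ 2 * (v ⬝ᵥ W *ᵥ v) ^ 2 * (v ⬝ᵥ (W * Θ * W) *ᵥ v) +
        c * (v ⬝ᵥ (W * Θ * W) *ᵥ v) ^ 2 +
        v ⬝ᵥ (W * Θ * W * Θ * Wᵀ * Θ * Wᵀ) *ᵥ v +
        c * (v ⬝ᵥ W *ᵥ v) * (v ⬝ᵥ (W * Θ * Wᵀ * Θ * Wᵀ) *ᵥ v) +
        c * (v ⬝ᵥ (W * Θ * W * Θ * Wᵀ) *ᵥ v) * (v ⬝ᵥ Wᵀ *ᵥ v) := by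
  have hHv (x : n → R) : H *ᵥ x = (c * (v ⬝ᵥ x)) • v := by
    rw [hH, smul_mulVec, vecMulVec_mulVec, op_smul_eq_smul, smul_smul]
  have hWt : v ⬝ᵥ Wᵀ *ᵥ v = v ⬝ᵥ W *ᵥ v := dotProduct_transpose_mulVec W v v
  have hWtΘWt : v ⬝ᵥ Wᵀ *ᵥ Θ *ᵥ Wᵀ *ᵥ v = v ⬝ᵥ W *ᵥ Θ *ᵥ W *ᵥ v := by
    have hΘt : Θᵀ = Θ := hΘ ▸ hH ▸ transpose_one_sub_smul_vecMulVec_self c v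
    simp only [mulVec_mulVec]
    rw [← dotProduct_transpose_mulVec, transpose_mul, transpose_mul, transpose_transpose, hΘt,
      Matrix.mul_assoc]
  have hHΘ : W ^ 2 * Wᵀ ^ 2 = W * (H + Θ) * W * (H + Θ) * Wᵀ * (H + Θ) * Wᵀ := by
    rw [hΘ, add_sub_cancel, Matrix.mul_one, Matrix.mul_one, Matrix.mul_one, sq, sq]
    simp only [Matrix.mul_assoc]
  rw [hHΘ]
  simp only [Matrix.mul_add, Matrix.add_mul, add_mulVec, dotProduct_add, ← mulVec_mulVec, hHv,
    mulVec_smul, dotProduct_smul, smul_eq_mul, hWt, hWtΘWt]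
  ring

theorem stmt11_general {N : ℕ} (W : Matrix (Fin N) (Fin N) ℝ)
    (L : Fin N → ℝ)
    (H Θ : Matrix (Fin N) (Fin N) ℝ)
    (hH : H = (N : ℝ) • vecMulVec L L) (hΘ : Θ = 1 - H)
    (p qch qdiv : ℝ)
    (hp : p = L ⬝ᵥ W.mulVec L)
    (hqch : qch = (1 / (N : ℝ)) * (L ⬝ᵥ (W * Θ * W).mulVec L))
    (hqdiv : qdiv = (1 / (N : ℝ)) * (L ⬝ᵥ (W * Θ * Wᵀ).mulVec L)) :
    L ⬝ᵥ (W ^ 2 * (Wᵀ) ^ 2).mulVec L =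
      (N : ℝ) ^ 3 * (p ^ 4 + p ^ 2 * qdiv + 2 * p ^ 2 * qch + qch ^ 2) +
        L ⬝ᵥ (W * Θ * W * Θ * Wᵀ * Θ * Wᵀ).mulVec L +
        (N : ℝ) * (L ⬝ᵥ W.mulVec L) * (L ⬝ᵥ (W * Θ * Wᵀ * Θ * Wᵀ).mulVec L) +
        (N : ℝ) * (L ⬝ᵥ (W * Θ * W * Θ * Wᵀ).mulVec L) * (L ⬝ᵥ (Wᵀ).mulVec L) := by
  rcases eq_or_ne N 0 with rfl | hN
  · simp [dotProduct]
  have hN' : (N : ℝ) ≠ 0 := Nat.cast_ne_zero.mpr hN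
  rw [dotProduct_sq_mul_transpose_sq_mulVec W H Θ L N hH hΘ, hp, hqch, hqdiv]
  field_simp

/-- **Decomposition of the fourth-order diverging motif (E:lin_sum2, exact form).**
Let `W` be any `N×N` real matrix, `L = (1/N)(1,…,1)ᵀ`, `H = N L Lᵀ`, `Θ = I − H`,
`p = LᵀWL`, `q_ch = (1/N)LᵀWΘWL`, `q_div = (1/N)LᵀWΘWᵀL`.  Then
`LᵀW²(Wᵀ)²L = N³[p⁴ + p²q_div + 2p²q_ch + q_ch²] + LᵀWΘWΘWᵀΘWᵀL
   + N(LᵀWL)(LᵀWΘWᵀΘWᵀL) + N(LᵀWΘWΘWᵀL)(LᵀWᵀL)`. -/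
theorem stmt11 {N : ℕ} (W : Matrix (Fin N) (Fin N) ℝ)
    (L : Fin N → ℝ) (hL : L = fun _ => 1 / (N : ℝ))
    (H Θ : Matrix (Fin N) (Fin N) ℝ)
    (hH : H = (N : ℝ) • vecMulVec L L) (hΘ : Θ = 1 - H)
    (p qch qdiv : ℝ)
    (hp : p = L ⬝ᵥ W.mulVec L)
    (hqch : qch = (1 / (N : ℝ)) * (L ⬝ᵥ (W * Θ * W).mulVec L))
    (hqdiv : qdiv = (1 / (N : ℝ)) * (L ⬝ᵥ (W * Θ * Wᵀ).mulVec L)) :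
    L ⬝ᵥ (W ^ 2 * (Wᵀ) ^ 2).mulVec L =
      (N : ℝ) ^ 3 * (p ^ 4 + p ^ 2 * qdiv + 2 * p ^ 2 * qch + qch ^ 2) +
        L ⬝ᵥ (W * Θ * W * Θ * Wᵀ * Θ * Wᵀ).mulVec L +
        (N : ℝ) * (L ⬝ᵥ W.mulVec L) * (L ⬝ᵥ (W * Θ * Wᵀ * Θ * Wᵀ).mulVec L) +
        (N : ℝ) * (L ⬝ᵥ (W * Θ * W * Θ * Wᵀ).mulVec L) * (L ⬝ᵥ (Wᵀ).mulVec L) :=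
  stmt11_general W L H Θ hH hΘ p qch qdiv hp hqch hqdiv
end

section
/- Let W⁰ be an N×N matrix with entries in {0,1}, p = (∑_{i,j} W⁰_{ij})/N², and define q_div = (∑_{i,j,k} W⁰_{ik}W⁰_{jk})/N³ − p², q_con = (∑_{i,j,k} W⁰_{ki}W⁰_{kj})/N³ − p², q_ch = (∑_{i,j,k} W⁰_{ik}W⁰_{kj})/N³ − p². Then |q_div| ≤ p(1−p), |q_con| ≤ p(1−p), and |q_ch| ≤ p(1−p). -/
/-!
With `a`, `b` the in- and out-degree sequences, both summing to the number of edges `S`, the three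
motif counts are `∑ aₖ²`, `∑ bₖ²` and `∑ aₖ bₖ`. Hence `N² q_div` and `N² q_con` are the empirical
variances of `a` and `b`, and `N² q_ch` is their covariance. Degrees lie in `[0, N]`, so
`∑ aₖ² ≤ N S`, which bounds both variances by `N² p (1 - p)`; Cauchy–Schwarz bounds the covariance
by the geometric mean of the variances.
-/

open Finset

section ScaledCovariance

variable {R ι : Type*} [CommRing R] [Fintype ι]

/-- `N² · Cov(f, g)` for the uniform distribution on the `N` points of `ι`. -/
def scaledCov (f g : ι → R) : R :=
  Fintype.card ι * ∑ k, f k * g k - (∑ k, f k) * ∑ k, g k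

theorem two_mul_scaledCov (f g : ι → R) :
    2 * scaledCov f g = ∑ k, ∑ l, (f k - f l) * (g k - g l) := by
  have expand : ∀ k l, (f k - f l) * (g k - g l) = f k * g k + f l * g l - f k * g l - f l * g k :=
    fun _ _ => by ring
  simp only [expand, sum_add_distrib, sum_sub_distrib, sum_const, card_univ, nsmul_eq_mul,
    ← mul_sum, ← sum_mul, scaledCov]
  ring

variable [LinearOrder R] [IsStrictOrderedRing R]

theorem scaledCov_self_nonneg (f : ι → R) : 0 ≤ scaledCov f f :=
  sub_nonneg.2 <| by simpa [sq] using sq_sum_le_card_mul_sum_sq (s := univ) (f := f)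

/-- Cauchy–Schwarz on `ι × ι`, through `two_mul_scaledCov`. -/
theorem sq_scaledCov_le (f g : ι → R) :
    scaledCov f g ^ 2 ≤ scaledCov f f * scaledCov g g := by
  have h := sum_mul_sq_le_sq_mul_sq (univ : Finset (ι × ι))
    (fun kl => f kl.1 - f kl.2) (fun kl => g kl.1 - g kl.2)
  have hsq (u : ι → R) : ∑ k, ∑ l, (u k - u l) ^ 2 = 2 * scaledCov u u := by
    simp only [sq, two_mul_scaledCov]
  simp only [Fintype.sum_prod_type, ← two_mul_scaledCov, hsq] at h
  linarith

theorem scaledCov_self_le_of_le {M : R} {f : ι → R} (h0 : ∀ k, 0 ≤ f k) (hM : ∀ k, f k ≤ M) :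
    scaledCov f f ≤ Fintype.card ι * M * ∑ k, f k - (∑ k, f k) ^ 2 := by
  have : ∑ k, f k * f k ≤ M * ∑ k, f k := by
    rw [mul_sum]
    exact sum_le_sum fun k _ => mul_le_mul_of_nonneg_right (hM k) (h0 k)
  rw [scaledCov, mul_assoc, sq]
  gcongr

theorem abs_scaledCov_le {f g : ι → R} (hf : ∀ k, f k ∈ Set.Icc 0 (Fintype.card ι : R))
    (hg : ∀ k, g k ∈ Set.Icc 0 (Fintype.card ι : R)) (hfg : ∑ k, f k = ∑ k, g k) :
    |scaledCov f g| ≤ Fintype.card ι * Fintype.card ι * ∑ k, f k - (∑ k, f k) ^ 2 := by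
  have hff := scaledCov_self_le_of_le (fun k => (hf k).1) (fun k => (hf k).2)
  have hgg := scaledCov_self_le_of_le (fun k => (hg k).1) (fun k => (hg k).2)
  rw [← hfg] at hgg
  have hprod := mul_le_mul hff hgg (scaledCov_self_nonneg g)
    ((scaledCov_self_nonneg f).trans hff)
  exact abs_le_of_sq_le_sq ((sq_scaledCov_le f g).trans (hprod.trans_eq (sq _).symm))
    ((scaledCov_self_nonneg f).trans hff)

end ScaledCovariance

theorem sum_sum_sum_mul_eq_sum_mul_sum {R α β κ : Type*} [CommSemiring R] [Fintype α]
    [Fintype β] [Fintype κ] (f : α → κ → R) (g : β → κ → R) :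
    ∑ i, ∑ j, ∑ k, f i k * g j k = ∑ k, (∑ i, f i k) * ∑ j, g j k := by
  simp_rw [sum_mul_sum]
  rw [sum_comm_cycle]

theorem sum_mem_Icc_zero_card {R ι : Type*} [CommRing R] [LinearOrder R] [IsStrictOrderedRing R]
    [Fintype ι] {f : ι → R} (h : ∀ i, f i = 0 ∨ f i = 1) :
    ∑ i, f i ∈ Set.Icc 0 (Fintype.card ι : R) := by
  have h0 (i : ι) : 0 ≤ f i := by rcases h i with h | h <;> simp [h]
  have h1 (i : ι) : f i ≤ 1 := by rcases h i with h | h <;> simp [h]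
  exact ⟨sum_nonneg fun i _ => h0 i, (sum_le_card_nsmul _ _ 1 fun i _ => h1 i).trans_eq (by simp)⟩

namespace Matrix

variable {R n : Type*} [Fintype n]

def inDegree [AddCommMonoid R] (W : Matrix n n R) (k : n) : R := ∑ i, W i k

def outDegree [AddCommMonoid R] (W : Matrix n n R) (k : n) : R := ∑ j, W k j

section Semiring

variable [CommSemiring R] (W : Matrix n n R)

theorem sum_inDegree : ∑ k, W.inDegree k = ∑ i, ∑ j, W i j := sum_comm

theorem sum_outDegree : ∑ k, W.outDegree k = ∑ i, ∑ j, W i j := rfl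

theorem sum_diverging_eq_sum_inDegree_mul_self :
    ∑ i, ∑ j, ∑ k, W i k * W j k = ∑ k, W.inDegree k * W.inDegree k :=
  sum_sum_sum_mul_eq_sum_mul_sum (fun i k => W i k) (fun j k => W j k)

theorem sum_converging_eq_sum_outDegree_mul_self :
    ∑ i, ∑ j, ∑ k, W k i * W k j = ∑ k, W.outDegree k * W.outDegree k :=
  sum_sum_sum_mul_eq_sum_mul_sum (fun i k => W k i) (fun j k => W k j)

theorem sum_chain_eq_sum_inDegree_mul_outDegree :
    ∑ i, ∑ j, ∑ k, W i k * W k j = ∑ k, W.inDegree k * W.outDegree k :=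
  sum_sum_sum_mul_eq_sum_mul_sum (fun i k => W i k) (fun j k => W k j)

end Semiring

variable [CommRing R] [LinearOrder R] [IsStrictOrderedRing R] {W : Matrix n n R}

theorem inDegree_mem_Icc (hW : ∀ i j, W i j = 0 ∨ W i j = 1) (k : n) :
    W.inDegree k ∈ Set.Icc 0 (Fintype.card n : R) :=
  sum_mem_Icc_zero_card fun i => hW i k

theorem outDegree_mem_Icc (hW : ∀ i j, W i j = 0 ∨ W i j = 1) (k : n) :
    W.outDegree k ∈ Set.Icc 0 (Fintype.card n : R) :=
  sum_mem_Icc_zero_card (hW k)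

end Matrix

/-- **Range of motif frequencies (q_range).**
Let `W⁰` be an `N×N` matrix with entries in `{0,1}`, `p = (∑ᵢⱼ W⁰ᵢⱼ)/N²`, and
`q_div = (∑ᵢⱼₖ W⁰ᵢₖW⁰ⱼₖ)/N³ − p²`, `q_con = (∑ᵢⱼₖ W⁰ₖᵢW⁰ₖⱼ)/N³ − p²`,
`q_ch = (∑ᵢⱼₖ W⁰ᵢₖW⁰ₖⱼ)/N³ − p²`.  Then
`|q_div| ≤ p(1−p)`, `|q_con| ≤ p(1−p)`, `|q_ch| ≤ p(1−p)`. -/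
theorem stmt16 {N : ℕ} (W : Matrix (Fin N) (Fin N) ℝ)
    (hW : ∀ i j, W i j = 0 ∨ W i j = 1)
    (p qdiv qcon qch : ℝ)
    (hp : p = (∑ i, ∑ j, W i j) / (N : ℝ) ^ 2)
    (hqdiv : qdiv = (∑ i, ∑ j, ∑ k, W i k * W j k) / (N : ℝ) ^ 3 - p ^ 2)
    (hqcon : qcon = (∑ i, ∑ j, ∑ k, W k i * W k j) / (N : ℝ) ^ 3 - p ^ 2)
    (hqch : qch = (∑ i, ∑ j, ∑ k, W i k * W k j) / (N : ℝ) ^ 3 - p ^ 2) :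
    |qdiv| ≤ p * (1 - p) ∧ |qcon| ≤ p * (1 - p) ∧ |qch| ≤ p * (1 - p) := by
  rcases Nat.eq_zero_or_pos N with rfl | hN
  · simp_all
  set S := ∑ i, ∑ j, W i j
  have hN : (N : ℝ) ≠ 0 := Nat.cast_ne_zero.2 hN.ne'
  have normalize {f g : Fin N → ℝ} (hf : ∑ k, f k = S) (hg : ∑ k, g k = S) :
      (∑ k, f k * g k) / N ^ 3 - p ^ 2 = scaledCov f g / N ^ 4 := by
    rw [hp, scaledCov, hf, hg, Fintype.card_fin]
    field_simp
  have bound {f g : Fin N → ℝ} (hf : ∀ k, f k ∈ Set.Icc 0 (N : ℝ))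
      (hg : ∀ k, g k ∈ Set.Icc 0 (N : ℝ)) (hfS : ∑ k, f k = S) (hgS : ∑ k, g k = S) :
      |scaledCov f g / N ^ 4| ≤ p * (1 - p) := by
    have h := abs_scaledCov_le (by simpa using hf) (by simpa using hg) (hfS.trans hgS.symm)
    rw [Fintype.card_fin, hfS] at h
    have hpp : p * (1 - p) = (N * N * S - S ^ 2) / N ^ 4 := by
      rw [hp]
      field_simp
    rw [abs_div, abs_of_nonneg (by positivity : (0 : ℝ) ≤ N ^ 4), hpp]
    gcongr
  have ha := W.inDegree_mem_Icc hW
  have hb := W.outDegree_mem_Icc hW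
  simp only [Fintype.card_fin] at ha hb
  have haS := W.sum_inDegree
  have hbS := W.sum_outDegree
  rw [hqdiv, hqcon, hqch, W.sum_diverging_eq_sum_inDegree_mul_self,
    W.sum_converging_eq_sum_outDegree_mul_self, W.sum_chain_eq_sum_inDegree_mul_outDegree,
    normalize haS haS, normalize hbS hbS, normalize haS hbS]
  exact ⟨bound ha ha haS haS, bound hb hb hbS hbS, bound ha hb haS hbS⟩
end

section
/- Let W⁰ be an N×N matrix with entries in {0,1}, p = (∑_{i,j} W⁰_{ij})/N², and q_div = (∑_{i,j,k} W⁰_{ik}W⁰_{jk})/N³ − p². Then q_div = p(1−p) if and only if every column of W⁰ is constant, i.e. for each k, either W⁰_{ik} = 1 for all i or W⁰_{ik} = 0 for all i. -/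
/-!
Write `cₖ = ∑ᵢ W⁰ᵢₖ` for the column sums. Then `N²p = ∑ₖ cₖ` and the triple sum is `∑ₖ cₖ²`, so
`q_div = p(1 - p)` says `∑ₖ cₖ² = N ∑ₖ cₖ`, i.e. `∑ₖ cₖ (N - cₖ) = 0`. Since `0 ≤ cₖ ≤ N`, every
term vanishes: each column sum is `0` or `N`, which for entries in `[0, 1]` means the column is
constantly `0` or constantly `1`.
-/

open Finset

theorem sum_sum_sum_mul_eq_sum_sq_colSum {m n R : Type*} [Fintype m] [Fintype n] [CommSemiring R]
    (W : Matrix m n R) : ∑ i, ∑ j, ∑ k, W i k * W j k = ∑ k, (∑ i, W i k) ^ 2 := by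
  simp only [sq, sum_mul_sum]
  exact (sum_congr rfl fun i _ => sum_comm).trans sum_comm

section UnitIntervalValued

variable {m : Type*} [Fintype m] {v : m → ℝ}

theorem sum_eq_card_iff_forall_eq_one (hv : ∀ i, v i ≤ 1) :
    ∑ i, v i = Fintype.card m ↔ ∀ i, v i = 1 := by
  have hsub : ∑ i, v i = Fintype.card m ↔ ∑ i, (1 - v i) = 0 := by
    simp [sum_sub_distrib, sub_eq_zero, eq_comm]
  rw [hsub, Fintype.sum_eq_zero_iff_of_nonneg fun i => sub_nonneg.2 (hv i)]
  simp only [funext_iff, Pi.zero_apply, sub_eq_zero, eq_comm (a := (1 : ℝ))]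

theorem sum_eq_zero_or_eq_card_iff (hv₀ : 0 ≤ v) (hv₁ : ∀ i, v i ≤ 1) :
    (∑ i, v i = 0 ∨ ∑ i, v i = Fintype.card m) ↔ (∀ i, v i = 1) ∨ (∀ i, v i = 0) := by
  rw [Fintype.sum_eq_zero_iff_of_nonneg hv₀, sum_eq_card_iff_forall_eq_one hv₁, funext_iff, or_comm]
  rfl

end UnitIntervalValued

theorem sum_sq_eq_mul_sum_iff {n : Type*} [Fintype n] {c : n → ℝ} {a : ℝ}
    (hc₀ : ∀ k, 0 ≤ c k) (hca : ∀ k, c k ≤ a) :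
    ∑ k, c k ^ 2 = a * ∑ k, c k ↔ ∀ k, c k = 0 ∨ c k = a := by
  have hgap : a * ∑ k, c k - ∑ k, c k ^ 2 = ∑ k, c k * (a - c k) := by
    rw [mul_sum, ← sum_sub_distrib]
    exact sum_congr rfl fun k _ => by ring
  have hterm : 0 ≤ fun k => c k * (a - c k) := fun k => mul_nonneg (hc₀ k) (sub_nonneg.2 (hca k))
  rw [eq_comm, ← sub_eq_zero, hgap, Fintype.sum_eq_zero_iff_of_nonneg hterm, funext_iff]
  simp [sub_eq_zero, eq_comm]

theorem div_pow_three_sub_sq_eq_iff {N S T : ℝ} (hN : N ≠ 0) :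
    T / N ^ 3 - (S / N ^ 2) ^ 2 = S / N ^ 2 * (1 - S / N ^ 2) ↔ T = N * S := by
  have hdiff : T / N ^ 3 - (S / N ^ 2) ^ 2 - S / N ^ 2 * (1 - S / N ^ 2) = (T - N * S) / N ^ 3 := by
    field_simp
    ring
  rw [← sub_eq_zero, hdiff, div_eq_zero_iff, sub_eq_zero]
  simp [hN]

/-- **Equality characterization for the diverging-motif bound (Appendix B).**
Let `W⁰` be an `N×N` matrix with entries in `{0,1}`, `p = (∑ᵢⱼ W⁰ᵢⱼ)/N²`, and
`q_div = (∑ᵢⱼₖ W⁰ᵢₖW⁰ⱼₖ)/N³ − p²`.  Then `q_div = p(1−p)` if and only if every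
column of `W⁰` is constant: for each `k`, either `W⁰ᵢₖ = 1` for all `i`, or
`W⁰ᵢₖ = 0` for all `i`. -/
theorem stmt17 {N : ℕ} (W : Matrix (Fin N) (Fin N) ℝ)
    (hW : ∀ i j, W i j = 0 ∨ W i j = 1)
    (p qdiv : ℝ)
    (hp : p = (∑ i, ∑ j, W i j) / (N : ℝ) ^ 2)
    (hqdiv : qdiv = (∑ i, ∑ j, ∑ k, W i k * W j k) / (N : ℝ) ^ 3 - p ^ 2) :
    qdiv = p * (1 - p) ↔
      ∀ k, (∀ i, W i k = 1) ∨ (∀ i, W i k = 0) := by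
  subst hp hqdiv
  rcases eq_or_ne N 0 with rfl | hN
  · simp
  have hW₀ : ∀ i k, 0 ≤ W i k := fun i k => by rcases hW i k with h | h <;> simp [h]
  have hW₁ : ∀ i k, W i k ≤ 1 := fun i k => by rcases hW i k with h | h <;> simp [h]
  have hcol₀ : ∀ k, 0 ≤ ∑ i, W i k := fun k => sum_nonneg fun i _ => hW₀ i k
  have hcolN : ∀ k, ∑ i, W i k ≤ N := fun k => by
    simpa using sum_le_card_nsmul univ (W · k) 1 fun i _ => hW₁ i k
  rw [sum_sum_sum_mul_eq_sum_sq_colSum, sum_comm (f := W),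
    div_pow_three_sub_sq_eq_iff (Nat.cast_ne_zero.2 hN), sum_sq_eq_mul_sum_iff hcol₀ hcolN]
  refine forall_congr' fun k => ?_
  simpa using sum_eq_zero_or_eq_card_iff (fun i => hW₀ i k) fun i => hW₁ i k
end
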